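/- arXiv:1412.6726 — 3 statements merged into one kernel-verified Lean document; each statement's English description precedes it below -/
import Mathlib

section
/- Let p(t) be a differentiable solution of the formation control system ȧ_i = Σ_{j∈V_i} u_ij·(a_i−a_j) defined on an interval. Then the function t ↦ Φ(p(t)) is nonincreasing; in particular Φ(p(t)) ≤ Φ(p(s)) whenever t ≥ s. -/
/-!
Along the flow, `Φ` changes at rate `2 ∑ᵢ ⟪aᵢ - bᵢ, ȧᵢ⟫`. Grouping this sum by edges, the edge
`{i, j}` contributes `u_ij ⟪d, d - w⟫` with `d = aᵢ - aⱼ` and `w = bᵢ - bⱼ`, and since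
`u_ij = ⟪w, d⟫ / ‖d‖² - 1` this equals `-(‖d‖² - ⟪w, d⟫)² / ‖d‖² ≤ 0`.
-/

open Finset
open scoped RealInnerProductSpace Classical

/-- The decentralized control law `u_ij(p)`. -/
noncomputable def uCtrl {n N : ℕ} (b a : Fin N → EuclideanSpace ℝ (Fin n)) (i j : Fin N) : ℝ :=
  if a j = a i then 0 else ⟪b j - b i, a j - a i⟫ / ‖a j - a i‖ ^ 2 - 1

/-- The quadratic Lyapunov function `Φ(p) = ∑ ‖a i - b i‖²`. -/
noncomputable def Phi {n N : ℕ} (b a : Fin N → EuclideanSpace ℝ (Fin n)) : ℝ :=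
  ∑ i, ‖a i - b i‖ ^ 2

/-- Sum over each undirected edge of `G` exactly once. -/
noncomputable def edgeSum {N : ℕ} (G : SimpleGraph (Fin N)) (f : Fin N → Fin N → ℝ) : ℝ :=
  ∑ p ∈ Finset.univ.filter (fun p : Fin N × Fin N => p.1 < p.2 ∧ G.Adj p.1 p.2), f p.1 p.2

/-- `p = a` is an equilibrium of the formation control system:
`∑_{j ∈ V_i} u_ij (p) • (a i - a j) = 0` for every vertex `i`. -/
noncomputable def IsEquilibrium {n N : ℕ} (G : SimpleGraph (Fin N))
    (b a : Fin N → EuclideanSpace ℝ (Fin n)) : Prop :=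
  ∀ i, ∑ j ∈ Finset.univ.filter (fun j => G.Adj i j), uCtrl b a i j • (a i - a j) = 0

lemma SimpleGraph.sum_sum_filter_adj_nonpos {V : Type*} [Fintype V] (G : SimpleGraph V)
    (f : V → V → ℝ) (hf : ∀ i j, G.Adj i j → f i j + f j i ≤ 0) :
    ∑ i, ∑ j ∈ univ.filter (G.Adj i), f i j ≤ 0 := by
  have hswap : ∑ i, ∑ j, (if G.Adj i j then f i j else 0) =
      ∑ i, ∑ j, (if G.Adj i j then f j i else 0) := by
    rw [Finset.sum_comm]
    simp only [G.adj_comm]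
  have hdouble : 2 * ∑ i, ∑ j, (if G.Adj i j then f i j else 0) =
      ∑ i, ∑ j, (if G.Adj i j then f i j + f j i else 0) := by
    rw [two_mul]
    nth_rewrite 2 [hswap]
    simp only [← Finset.sum_add_distrib, ← ite_add_zero]
  have hpair : ∑ i, ∑ j, (if G.Adj i j then f i j + f j i else 0) ≤ 0 :=
    Finset.sum_nonpos fun i _ => Finset.sum_nonpos fun j _ => by
      split_ifs with h
      exacts [hf i j h, le_rfl]
  simp only [Finset.sum_filter]
  linarith

section InnerProductSpace

variable {E : Type*} [NormedAddCommGroup E] [InnerProductSpace ℝ E]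

lemma div_norm_sq_sub_one_mul_inner_sub_nonpos (d w : E) :
    (⟪w, d⟫ / ‖d‖ ^ 2 - 1) * ⟪d, d - w⟫ ≤ 0 := by
  rcases eq_or_ne d 0 with rfl | hd
  · simp
  have hpos : 0 < ‖d‖ ^ 2 := by positivity
  have hexpand : ⟪d, d - w⟫ = ‖d‖ ^ 2 - ⟪w, d⟫ := by
    rw [inner_sub_right, real_inner_self_eq_norm_sq, real_inner_comm]
  have hsquare : (⟪w, d⟫ / ‖d‖ ^ 2 - 1) * (‖d‖ ^ 2 - ⟪w, d⟫) =
      -((‖d‖ ^ 2 - ⟪w, d⟫) ^ 2 / ‖d‖ ^ 2) := by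
    field_simp
    ring
  rw [hexpand, hsquare, neg_nonpos]
  positivity

end InnerProductSpace

section Formation

variable {n N : ℕ}

noncomputable def formationField (G : SimpleGraph (Fin N)) (b p : Fin N → EuclideanSpace ℝ (Fin n))
    (i : Fin N) : EuclideanSpace ℝ (Fin n) :=
  ∑ j ∈ univ.filter (fun j => G.Adj i j), uCtrl b p i j • (p i - p j)

lemma uCtrl_eq (b p : Fin N → EuclideanSpace ℝ (Fin n)) {i j : Fin N} (h : p i ≠ p j) :
    uCtrl b p i j = ⟪b i - b j, p i - p j⟫ / ‖p i - p j‖ ^ 2 - 1 := by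
  rw [uCtrl, if_neg (Ne.symm h), ← neg_sub (b i), ← neg_sub (p i), inner_neg_neg, norm_neg]

lemma uCtrl_comm (b p : Fin N → EuclideanSpace ℝ (Fin n)) (i j : Fin N) :
    uCtrl b p j i = uCtrl b p i j := by
  rcases eq_or_ne (p i) (p j) with h | h
  · simp [uCtrl, h]
  · rw [uCtrl_eq b p h, uCtrl_eq b p (Ne.symm h), ← neg_sub (b i), ← neg_sub (p i),
      inner_neg_neg, norm_neg]

lemma uCtrl_edge_nonpos (b p : Fin N → EuclideanSpace ℝ (Fin n)) (i j : Fin N) :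
    uCtrl b p i j * ⟪p i - b i, p i - p j⟫ + uCtrl b p j i * ⟪p j - b j, p j - p i⟫ ≤ 0 := by
  have hedge : uCtrl b p i j * ⟪p i - b i, p i - p j⟫ + uCtrl b p j i * ⟪p j - b j, p j - p i⟫ =
      uCtrl b p i j * ⟪p i - p j, (p i - p j) - (b i - b j)⟫ := by
    rw [uCtrl_comm b p i j, ← neg_sub (p i) (p j), inner_neg_right, ← mul_add, ← sub_eq_add_neg,
      ← inner_sub_left, real_inner_comm]
    congr 2
    abel
  rw [hedge]
  rcases eq_or_ne (p i) (p j) with h | h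
  · simp [h]
  · rw [uCtrl_eq b p h]
    exact div_norm_sq_sub_one_mul_inner_sub_nonpos _ _

lemma sum_inner_formationField_nonpos (G : SimpleGraph (Fin N))
    (b p : Fin N → EuclideanSpace ℝ (Fin n)) :
    ∑ i, ⟪p i - b i, formationField G b p i⟫ ≤ 0 := by
  simp only [formationField, inner_sum, real_inner_smul_right]
  exact G.sum_sum_filter_adj_nonpos _ fun i j _ => uCtrl_edge_nonpos b p i j

lemma hasDerivAt_Phi (b : Fin N → EuclideanSpace ℝ (Fin n))
    {a : ℝ → Fin N → EuclideanSpace ℝ (Fin n)} {v : Fin N → EuclideanSpace ℝ (Fin n)} {x : ℝ}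
    (ha : ∀ i, HasDerivAt (fun τ => a τ i) (v i) x) :
    HasDerivAt (fun τ => Phi b (a τ)) (2 * ∑ i, ⟪a x i - b i, v i⟫) x := by
  rw [Finset.mul_sum]
  exact HasDerivAt.fun_sum fun i _ => ((ha i).sub_const (b i)).norm_sq

end Formation

/-- Along a differentiable solution of the formation control system on the interval `[s,t]`,
the Lyapunov function `Φ` is nonincreasing: `Φ(p(t)) ≤ Φ(p(s))` whenever `t ≥ s`. -/
theorem lyapunov_nonincreasing {n N : ℕ} (G : SimpleGraph (Fin N))
    (b : Fin N → EuclideanSpace ℝ (Fin n))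
    (a : ℝ → Fin N → EuclideanSpace ℝ (Fin n))
    (s t : ℝ) (hst : s ≤ t)
    (hderiv : ∀ i, ∀ x ∈ Set.Icc s t, HasDerivAt (fun τ => a τ i)
      (∑ j ∈ Finset.univ.filter (fun j => G.Adj i j),
        uCtrl b (a x) i j • (a x i - a x j)) x) :
    Phi b (a t) ≤ Phi b (a s) := by
  have hPhi : ∀ x ∈ Set.Icc s t, HasDerivAt (fun τ => Phi b (a τ))
      (2 * ∑ i, ⟪a x i - b i, formationField G b (a x) i⟫) x :=
    fun x hx => hasDerivAt_Phi b fun i => hderiv i x hx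
  have hanti : AntitoneOn (fun τ => Phi b (a τ)) (Set.Icc s t) :=
    antitoneOn_of_hasDerivWithinAt_nonpos (convex_Icc s t)
      (fun x hx => (hPhi x hx).continuousAt.continuousWithinAt)
      (fun x hx => (hPhi x (interior_subset hx)).hasDerivWithinAt)
      (fun x _ => mul_nonpos_of_nonneg_of_nonpos zero_le_two
        (sum_inner_formationField_nonpos G b (a x)))
  exact hanti (Set.left_mem_Icc.mpr hst) (Set.right_mem_Icc.mpr hst) hst
end

section
/- For a configuration p = (a_1,…,a_N), the quantity Σ_{(i,j)∈E} u_ij(p)² · |a_i − a_j|² equals zero if and only if p is an equilibrium of the formation control system, i.e., if and only if Σ_{j∈V_i} u_ij(p)·(a_i − a_j) = 0 for every i = 1,…,N. -/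
/-! Since `u_ij ‖a_j - a_i‖² = ⟪(b_j - a_j) - (b_i - a_i), a_j - a_i⟫`, regrouping the two
orientations of every edge by vertex turns the edge sum of `u_ij² ‖a_i - a_j‖²` into
`∑ i, ⟪∑_{j ∈ V_i} u_ij (a_i - a_j), b_i - a_i⟫`, which vanishes at an equilibrium.
Conversely the edge sum has nonnegative terms, so it vanishes only if every
`u_ij (a_i - a_j)` does. -/

open Finset
open scoped RealInnerProductSpace Classical

lemma edgeSum_add_swap {N : ℕ} (G : SimpleGraph (Fin N)) (f : Fin N → Fin N → ℝ) :
    edgeSum G (fun i j => f i j + f j i) = ∑ i, ∑ j ∈ univ.filter (G.Adj i), f i j := by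
  have hsplit : ∀ i j, (if G.Adj i j then f i j else 0) =
      (if i < j ∧ G.Adj i j then f i j else 0) + (if j < i ∧ G.Adj j i then f i j else 0) := by
    intro i j
    rcases lt_trichotomy i j with h | rfl | h
    · simp [h, h.not_gt]
    · simp
    · simp [h, h.not_gt, G.adj_comm]
  simp only [edgeSum, sum_filter, Fintype.sum_prod_type, hsplit, sum_add_distrib]
  rw [sum_comm (f := fun i j => if j < i ∧ G.Adj j i then f i j else 0)]

lemma uCtrl_symm {n N : ℕ} (b a : Fin N → EuclideanSpace ℝ (Fin n)) (i j : Fin N) :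
    uCtrl b a i j = uCtrl b a j i := by
  unfold uCtrl
  by_cases h : a j = a i
  · rw [if_pos h, if_pos h.symm]
  · rw [if_neg h, if_neg (Ne.symm h), ← neg_sub (b j), ← neg_sub (a j), inner_neg_neg, norm_neg]

lemma uCtrl_mul_norm_sq {n N : ℕ} (b a : Fin N → EuclideanSpace ℝ (Fin n)) (i j : Fin N) :
    uCtrl b a i j * ‖a j - a i‖ ^ 2 = ⟪b j - b i - (a j - a i), a j - a i⟫ := by
  by_cases h : a j = a i
  · simp [uCtrl, h]
  · have hd : ‖a j - a i‖ ≠ 0 := norm_ne_zero_iff.mpr (sub_ne_zero.mpr h)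
    rw [uCtrl, if_neg h, inner_sub_left (b j - b i), real_inner_self_eq_norm_sq]
    field_simp

lemma uCtrl_sq_mul_norm_sq {n N : ℕ} (b a : Fin N → EuclideanSpace ℝ (Fin n)) (i j : Fin N) :
    uCtrl b a i j ^ 2 * ‖a i - a j‖ ^ 2 =
      ⟪uCtrl b a i j • (a i - a j), b i - a i⟫ + ⟪uCtrl b a j i • (a j - a i), b j - a j⟫ := by
  rw [uCtrl_symm b a j i, norm_sub_rev, sq, mul_assoc, uCtrl_mul_norm_sq, real_inner_smul_left,
    real_inner_smul_left, ← mul_add, ← neg_sub (a j) (a i), inner_neg_left, neg_add_eq_sub,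
    ← inner_sub_right, real_inner_comm]
  congr 2
  abel

lemma edgeSum_eq_zero_iff_of_nonneg {N : ℕ} (G : SimpleGraph (Fin N)) {f : Fin N → Fin N → ℝ}
    (hf : ∀ i j, 0 ≤ f i j) (hsymm : ∀ i j, f i j = f j i) :
    edgeSum G f = 0 ↔ ∀ i j, G.Adj i j → f i j = 0 := by
  rw [edgeSum, sum_eq_zero_iff_of_nonneg fun p _ => hf p.1 p.2]
  refine ⟨fun h i j hij => ?_, fun h p hp => h p.1 p.2 (mem_filter.1 hp).2.2⟩
  rcases lt_or_gt_of_ne (G.ne_of_adj hij) with hlt | hgt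
  · exact h (i, j) (by simp [hlt, hij])
  · exact hsymm i j ▸ h (j, i) (by simp [hgt, hij.symm])

lemma sq_mul_norm_sq_eq_zero_iff {E : Type*} [NormedAddCommGroup E] [Module ℝ E]
    [NoZeroSMulDivisors ℝ E] (c : ℝ) (v : E) : c ^ 2 * ‖v‖ ^ 2 = 0 ↔ c • v = 0 := by
  simp [smul_eq_zero]

lemma edgeSum_uCtrl_sq_mul_norm_sq {n N : ℕ} (G : SimpleGraph (Fin N))
    (b a : Fin N → EuclideanSpace ℝ (Fin n)) :
    edgeSum G (fun i j => uCtrl b a i j ^ 2 * ‖a i - a j‖ ^ 2) =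
      ∑ i, ⟪∑ j ∈ univ.filter (G.Adj i), uCtrl b a i j • (a i - a j), b i - a i⟫ := by
  simp only [uCtrl_sq_mul_norm_sq, sum_inner]
  exact edgeSum_add_swap G fun i j => ⟪uCtrl b a i j • (a i - a j), b i - a i⟫

/-- `∑_{(i,j)∈E} u_ij(p)² ‖a_i - a_j‖² = 0` iff `p` is an equilibrium of the
formation control system. -/
theorem edgeSum_eq_zero_iff_isEquilibrium {n N : ℕ} (G : SimpleGraph (Fin N))
    (b a : Fin N → EuclideanSpace ℝ (Fin n)) :
    edgeSum G (fun i j => (uCtrl b a i j) ^ 2 * ‖a i - a j‖ ^ 2) = 0 ↔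
      IsEquilibrium G b a := by
  constructor
  · intro h i
    rw [edgeSum_eq_zero_iff_of_nonneg G (fun i j => by positivity)
      (fun i j => by rw [uCtrl_symm, norm_sub_rev])] at h
    exact sum_eq_zero fun j hj =>
      (sq_mul_norm_sq_eq_zero_iff _ _).1 (h i j (mem_filter.1 hj).2)
  · intro heq
    rw [edgeSum_uCtrl_sq_mul_norm_sq]
    exact sum_eq_zero fun i _ => by rw [heq i, inner_zero_left]
end

section
/- Let G = (V,E) be a tree on V = {1,…,N} with N ≥ 2, let n ≥ 1, and let the target configuration q = (b_1,…,b_N) satisfy Σ_{i=1}^N b_i = 0 and b_i ≠ b_j for every edge (i,j) ∈ E. Let K = { p = (a_1,…,a_N) ∈ (ℝ^n)^N : Σ_{i=1}^N a_i = 0 and p is an equilibrium of the formation control system }. Then K (with its subspace topology) is homeomorphic to the product of N − 1 copies of the unit sphere S^{n−1} ⊂ ℝ^n. -/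
open Finset
open scoped RealInnerProductSpace Classical

/-!
Pairing the equilibrium equation at vertex `i` with `a i - b i` and summing over `i`, each edge
contributes `-‖u_ij (a_i - a_j)‖²`, so at an equilibrium every summand `u_ij (a_i - a_j)` vanishes,
i.e. `⟪b_j - b_i, a_j - a_i⟫ = ‖a_j - a_i‖²`: the vector `a_j - a_i` lies on the sphere with
diameter `[0, b_j - b_i]`, a genuine sphere since `b_i ≠ b_j`. For a tree,
`a ↦ (∑ a_i, (a_j - a_i)_{ij ∈ E})` is a linear isomorphism (injective by connectedness, and
`|E| = N - 1` matches the dimensions), so `K` is the product of these `N - 1` spheres.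
-/

namespace SimpleGraph

theorem Reachable.eq_of_forall_adj {V α : Type*} {G : SimpleGraph V} {f : V → α}
    (hf : ∀ u v, G.Adj u v → f u = f v) {u v : V} (h : G.Reachable u v) : f u = f v := by
  obtain ⟨w⟩ := h
  induction w with
  | nil => rfl
  | cons hadj _ ih => exact (hf _ _ hadj).trans ih

variable {V : Type*} {G : SimpleGraph V} {M : Type*} [AddCommGroup M]

theorem IsTree.card_edgeSet [Fintype V] [Fintype G.edgeSet] (hG : G.IsTree) :
    Fintype.card G.edgeSet + 1 = Fintype.card V := by
  rw [← edgeFinset_card, hG.card_edgeFinset]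

theorem IsTree.finrank_pi_eq_finrank_prod [Fintype V] (K : Type*) [Field K] [Module K M]
    [FiniteDimensional K M] (hG : G.IsTree) :
    Module.finrank K (V → M) = Module.finrank K (M × (G.edgeSet → M)) := by
  have hcard := hG.card_edgeSet
  simp only [Module.finrank_prod, Module.finrank_pi_fintype, Finset.sum_const, Finset.card_univ,
    smul_eq_mul, ← hcard]
  ring

variable [LinearOrder V]

variable (G) in
def edgeDiff (R : Type*) [Semiring R] [Module R M] : (V → M) →ₗ[R] G.edgeSet → M :=
  LinearMap.pi fun e =>
    LinearMap.proj (R := R) (φ := fun _ => M) e.1.sup - LinearMap.proj (R := R) e.1.inf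

variable (G) in
@[simp]
theorem edgeDiff_apply (R : Type*) [Semiring R] [Module R M] (a : V → M) (e : G.edgeSet) :
    G.edgeDiff R a e = a e.1.sup - a e.1.inf :=
  rfl

theorem edgeDiff_ne_zero (R : Type*) [Semiring R] [Module R M] {b : V → M}
    (hb : ∀ u v, G.Adj u v → b u ≠ b v) (e : G.edgeSet) : G.edgeDiff R b e ≠ 0 := by
  obtain ⟨e, he⟩ := e
  induction e using Sym2.ind with | _ u v =>
  rcases le_total u v with huv | huv <;> simp [huv, sub_eq_zero]
  exacts [(hb u v he).symm, hb u v he]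

theorem Connected.eq_of_edgeDiff_eq_zero (R : Type*) [Semiring R] [Module R M]
    (hG : G.Connected) {a : V → M} (ha : G.edgeDiff R a = 0) (u v : V) : a u = a v := by
  refine (hG.preconnected u v).eq_of_forall_adj fun u v huv => ?_
  have h := congrFun ha ⟨s(u, v), huv⟩
  rcases le_total u v with huv' | huv' <;> simp [huv'] at h
  exacts [(sub_eq_zero.mp h).symm, sub_eq_zero.mp h]

variable [Fintype V] (K : Type*) [Field K] [CharZero K] [Module K M]

theorem IsTree.injective_sum_prod_edgeDiff (hG : G.IsTree) :
    Function.Injective ((∑ v, LinearMap.proj v : (V → M) →ₗ[K] M).prod (G.edgeDiff K)) := by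
  rw [← LinearMap.ker_eq_bot, LinearMap.ker_eq_bot']
  intro a ha
  obtain ⟨hsum, hdiff⟩ := Prod.ext_iff.mp ha
  obtain ⟨v₀⟩ := hG.connected.nonempty
  have hconst : ∀ v, a v = a v₀ := fun v => hG.connected.eq_of_edgeDiff_eq_zero K hdiff v v₀
  have hsum' : (Fintype.card V : K) • a v₀ = 0 := by
    simpa [hconst, Nat.cast_smul_eq_nsmul] using hsum
  have hV : (Fintype.card V : K) ≠ 0 := Nat.cast_ne_zero.mpr (Fintype.card_pos_iff.mpr ⟨v₀⟩).ne'
  exact funext fun v => (hconst v).trans ((smul_eq_zero.mp hsum').resolve_left hV)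

noncomputable def IsTree.sumEdgeDiffEquiv [FiniteDimensional K M] (hG : G.IsTree) :
    (V → M) ≃ₗ[K] M × (G.edgeSet → M) :=
  LinearMap.linearEquivOfInjective _ (hG.injective_sum_prod_edgeDiff K)
    (hG.finrank_pi_eq_finrank_prod K)

@[simp]
theorem IsTree.sumEdgeDiffEquiv_apply [FiniteDimensional K M] (hG : G.IsTree) (a : V → M) :
    hG.sumEdgeDiffEquiv K a = (∑ v, a v, G.edgeDiff K a) := by
  simp [sumEdgeDiffEquiv]

end SimpleGraph

def Homeomorph.subtypePiEquivPi {ι : Type*} {Y : ι → Type*} [∀ i, TopologicalSpace (Y i)]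
    {p : ∀ i, Y i → Prop} : {f : ∀ i, Y i // ∀ i, p i (f i)} ≃ₜ ∀ i, {y // p i y} where
  toEquiv := Equiv.subtypePiEquivPi
  continuous_toFun :=
    continuous_pi fun i => ((continuous_apply i).comp continuous_subtype_val).subtype_mk _
  continuous_invFun :=
    (continuous_pi fun i => continuous_subtype_val.comp (continuous_apply i)).subtype_mk _

section ThalesSphere

variable {F : Type*} [NormedAddCommGroup F] [InnerProductSpace ℝ F]

theorem inner_eq_norm_sq_iff_norm_two_smul_sub {c x : F} :
    ⟪c, x⟫ = ‖x‖ ^ 2 ↔ ‖(2 : ℝ) • x - c‖ = ‖c‖ := by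
  have h : ‖(2 : ℝ) • x - c‖ ^ 2 = ‖c‖ ^ 2 + 4 * (‖x‖ ^ 2 - ⟪c, x⟫) := by
    rw [norm_sub_sq_real, norm_smul, real_inner_smul_left, real_inner_comm]
    norm_num
    ring
  rw [← sq_eq_sq₀ (norm_nonneg _) (norm_nonneg _), h]
  constructor <;> intro h' <;> linarith

noncomputable def thalesSphereHomeomorphUnitSphere {c : F} (hc : c ≠ 0) :
    {x : F // ⟪c, x⟫ = ‖x‖ ^ 2} ≃ₜ Metric.sphere (0 : F) 1 :=
  ((Homeomorph.smulOfNeZero (2 : ℝ) two_ne_zero).trans <| (Homeomorph.subRight c).trans <|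
    Homeomorph.smulOfNeZero ‖c‖⁻¹ (inv_ne_zero (norm_ne_zero_iff.mpr hc))).subtype fun x => by
    simp [inner_eq_norm_sq_iff_norm_two_smul_sub, norm_smul,
      inv_mul_eq_one₀ (norm_ne_zero_iff.mpr hc), eq_comm]

end ThalesSphere

theorem eq_zero_of_sum_eq_zero_of_add_swap_eq_neg {ι R : Type*} [Fintype ι] [AddCommGroup R]
    [PartialOrder R] [IsOrderedAddMonoid R] {f g : ι → ι → R} (hg : 0 ≤ g)
    (hfg : ∀ i j, f i j + f j i = -g i j) (hf : ∀ i, ∑ j, f i j = 0) : g = 0 := by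
  have hsum : ∑ i, ∑ j, g i j = 0 := by
    rw [← neg_eq_zero, ← Finset.sum_neg_distrib]
    simp only [← Finset.sum_neg_distrib, ← hfg, Finset.sum_add_distrib]
    rw [Finset.sum_comm (f := fun i j => f j i)]
    simp [hf]
  have hrow := (Fintype.sum_eq_zero_iff_of_nonneg fun i => Fintype.sum_nonneg (hg i)).mp hsum
  exact funext fun i => (Fintype.sum_eq_zero_iff_of_nonneg (hg i)).mp (congrFun hrow i)

section Equilibrium

variable {n N : ℕ} (G : SimpleGraph (Fin N)) (b a : Fin N → EuclideanSpace ℝ (Fin n)) (i j : Fin N)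

theorem uCtrl_comm_s12 : uCtrl b a j i = uCtrl b a i j := by
  simp only [uCtrl, eq_comm (a := a i), ← neg_sub (b i), ← neg_sub (a i), inner_neg_neg, norm_neg]

theorem uCtrl_add_one_mul_norm_sq :
    (uCtrl b a i j + 1) * ‖a j - a i‖ ^ 2 = ⟪b j - b i, a j - a i⟫ := by
  by_cases h : a j = a i
  · simp [uCtrl, h]
  · have : ‖a j - a i‖ ^ 2 ≠ 0 := by simp [sub_eq_zero, h]
    rw [uCtrl, if_neg h, sub_add_cancel, div_mul_cancel₀ _ this]

theorem uCtrl_mul_inner_add_uCtrl_mul_inner :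
    uCtrl b a i j * ⟪a i - b i, a i - a j⟫ + uCtrl b a j i * ⟪a j - b j, a j - a i⟫ =
      -‖uCtrl b a i j • (a i - a j)‖ ^ 2 := by
  have hd : ⟪b i - b j, a i - a j⟫ = (uCtrl b a i j + 1) * ‖a i - a j‖ ^ 2 := by
    rw [← neg_sub (b j), ← neg_sub (a j), inner_neg_neg, norm_neg, uCtrl_add_one_mul_norm_sq]
  have hsum : ⟪a i - b i, a i - a j⟫ + ⟪a j - b j, a j - a i⟫ =
      ‖a i - a j‖ ^ 2 - ⟪b i - b j, a i - a j⟫ := by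
    rw [← neg_sub (a i) (a j), inner_neg_right, ← sub_eq_add_neg, ← inner_sub_left,
      ← real_inner_self_eq_norm_sq, ← inner_sub_left]
    congr 1
    abel
  rw [uCtrl_comm_s12 b a i j, ← mul_add, hsum, hd, norm_smul, mul_pow, Real.norm_eq_abs, sq_abs]
  ring

theorem uCtrl_smul_sub_eq_zero_iff :
    uCtrl b a i j • (a i - a j) = 0 ↔ ⟪b j - b i, a j - a i⟫ = ‖a j - a i‖ ^ 2 := by
  rw [← uCtrl_add_one_mul_norm_sq]
  by_cases h : a j = a i
  · simp [h]
  · have : ‖a j - a i‖ ^ 2 ≠ 0 := by simp [sub_eq_zero, h]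
    rw [smul_eq_zero, sub_eq_zero, or_iff_left (Ne.symm h), add_one_mul, add_eq_right,
      mul_eq_zero, or_iff_left this]

theorem isEquilibrium_iff_forall_adj :
    IsEquilibrium G b a ↔ ∀ i j, G.Adj i j → ⟪b j - b i, a j - a i⟫ = ‖a j - a i‖ ^ 2 := by
  simp only [← uCtrl_smul_sub_eq_zero_iff]
  refine ⟨fun h => ?_, fun h i => Finset.sum_eq_zero fun j hj => h i j (Finset.mem_filter.mp hj).2⟩
  have hg := eq_zero_of_sum_eq_zero_of_add_swap_eq_neg
    (f := fun i j => if G.Adj i j then uCtrl b a i j * ⟪a i - b i, a i - a j⟫ else 0)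
    (g := fun i j => if G.Adj i j then ‖uCtrl b a i j • (a i - a j)‖ ^ 2 else 0)
    (fun i j => by dsimp only; split_ifs <;> positivity)
    (fun i j => by
      rw [G.adj_comm j i]
      split_ifs
      exacts [uCtrl_mul_inner_add_uCtrl_mul_inner b a i j, by simp])
    (fun i => by
      simp_rw [← Finset.sum_filter, ← real_inner_smul_right, ← inner_sum, h i, inner_zero_right])
  intro i j hij
  simpa [hij] using congrFun (congrFun hg i) j

theorem isEquilibrium_iff_forall_edge : IsEquilibrium G b a ↔
    ∀ e : G.edgeSet, ⟪G.edgeDiff ℝ b e, G.edgeDiff ℝ a e⟫ = ‖G.edgeDiff ℝ a e‖ ^ 2 := by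
  have hswap : ∀ i j, ⟪b j - b i, a j - a i⟫ = ‖a j - a i‖ ^ 2 ↔
      ⟪b i - b j, a i - a j⟫ = ‖a i - a j‖ ^ 2 := fun i j => by
    rw [← neg_sub (b i), ← neg_sub (a i), inner_neg_neg, norm_neg]
  rw [isEquilibrium_iff_forall_adj]
  refine ⟨fun h ⟨e, he⟩ => ?_, fun h i j hij => ?_⟩
  · induction e using Sym2.ind with | _ i j =>
    rcases le_total i j with hle | hle
    · simpa [hle] using h i j he
    · simpa [hle] using (hswap i j).mp (h i j he)
  · rcases le_total i j with hle | hle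
    · simpa [hle] using h ⟨s(i, j), hij⟩
    · exact (hswap i j).mpr (by simpa [hle] using h ⟨s(i, j), hij⟩)

end Equilibrium

theorem equilibria_homeomorph_spheres_general {n N : ℕ}
    (G : SimpleGraph (Fin N)) (hG : G.IsTree)
    (b : Fin N → EuclideanSpace ℝ (Fin n))
    (hbe : ∀ i j, G.Adj i j → b i ≠ b j) :
    Nonempty
      ({p : Fin N → EuclideanSpace ℝ (Fin n) // ∑ i, p i = 0 ∧ IsEquilibrium G b p} ≃ₜ
        (Fin (N - 1) → Metric.sphere (0 : EuclideanSpace ℝ (Fin n)) 1)) := by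
  have hcard : Fintype.card G.edgeSet = N - 1 := by
    have := hG.card_edgeSet
    rw [Fintype.card_fin] at this
    omega
  let T := (hG.sumEdgeDiffEquiv ℝ (M := EuclideanSpace ℝ (Fin n))).toContinuousLinearEquiv
    |>.toHomeomorph
  let S : Set (G.edgeSet → EuclideanSpace ℝ (Fin n)) :=
    {y | ∀ e, ⟪G.edgeDiff ℝ b e, y e⟫ = ‖y e‖ ^ 2}
  have hK : ∀ p, (∑ i, p i = 0 ∧ IsEquilibrium G b p) ↔ T p ∈ ({0} : Set _) ×ˢ S := fun p => by
    simp [T, S, isEquilibrium_iff_forall_edge]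
  exact ⟨(T.subtype hK).trans <| (Homeomorph.Set.prod _ _).trans <|
    (Homeomorph.uniqueProd _ _).trans <| Homeomorph.subtypePiEquivPi.trans <|
    (Homeomorph.piCongrRight fun e =>
      thalesSphereHomeomorphUnitSphere (SimpleGraph.edgeDiff_ne_zero ℝ hbe e)).trans <|
    Homeomorph.piCongrLeft (Y := fun _ => Metric.sphere (0 : EuclideanSpace ℝ (Fin n)) 1)
      (Fintype.equivFinOfCardEq hcard)⟩

/-- If `G` is a tree on `N ≥ 2` vertices, `n ≥ 1`, the target configuration has zero centroid
and distinct targets along every edge, then the set `K` of zero-centroid equilibria of the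
formation control system is homeomorphic to the product of `N - 1` copies of the unit sphere
`S^{n-1} ⊆ ℝ^n`. -/
theorem equilibria_homeomorph_spheres {n N : ℕ} (hn : 1 ≤ n) (hN : 2 ≤ N)
    (G : SimpleGraph (Fin N)) (hG : G.IsTree)
    (b : Fin N → EuclideanSpace ℝ (Fin n))
    (hb0 : ∑ i, b i = 0)
    (hbe : ∀ i j, G.Adj i j → b i ≠ b j) :
    Nonempty
      ({p : Fin N → EuclideanSpace ℝ (Fin n) // ∑ i, p i = 0 ∧ IsEquilibrium G b p} ≃ₜ
        (Fin (N - 1) → Metric.sphere (0 : EuclideanSpace ℝ (Fin n)) 1)) :=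
  equilibria_homeomorph_spheres_general G hG b hbe
end
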